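/- Let L = {l_1,…,l_s} be a finite set of s non-negative integers and K = {k_1,…,k_r} a set of r positive integers with r ≤ s and k_i > s − r for every 1 ≤ i ≤ r. Then for every finite simple graph G that admits an L-intersection representation in which the size of every assigned set lies in K, mr(G^c) ≤ r · Σ_{t=s−r+1}^{s} C(Θ_{L,K}(G), t), where mr denotes the minimum rank over the real numbers. -/

import Mathlib

/-- An `L`-intersection representation of `G` with universe `Fin l`: two distinct vertices are
adjacent iff the size of the intersection of their assigned sets lies in `L`. -/
def IsLRep {V : Type*} {l : ℕ} (G : SimpleGraph V) (L : Set ℕ) (A : V → Finset (Fin l)) : Prop :=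
  ∀ u v : V, u ≠ v → (G.Adj u v ↔ (A u ∩ A v).card ∈ L)

/-- `G` has an `L`-intersection representation on a universe of size `l`. -/
def HasLRep {V : Type*} (G : SimpleGraph V) (L : Set ℕ) (l : ℕ) : Prop :=
  ∃ A : V → Finset (Fin l), IsLRep G L A

/-- The `L`-intersection number `Θ_L(G)`. -/
noncomputable def thetaL {V : Type*} (G : SimpleGraph V) (L : Set ℕ) : ℕ :=
  sInf {l | HasLRep G L l}

/-- The minimum rank of a graph `G` over a field `F`: the minimum rank of a symmetric matrix
over `F` whose off-diagonal entries are nonzero exactly at the edges of `G`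
(diagonal entries are arbitrary). -/
noncomputable def minRank (F : Type*) [Field F] {V : Type*} [Fintype V] (G : SimpleGraph V) : ℕ :=
  sInf {r | ∃ A : Matrix V V F, A.IsSymm ∧
    (∀ u v : V, u ≠ v → (A u v ≠ 0 ↔ G.Adj u v)) ∧ A.rank = r}

/-- `G` has an `L`-intersection representation with `l` labels in which the size of every
assigned set lies in `K`. -/
def HasKLRep {V : Type*} (G : SimpleGraph V) (L : Set ℕ) (K : Finset ℕ) (l : ℕ) : Prop :=
  ∃ A : V → Finset (Fin l), (∀ v, (A v).card ∈ K) ∧ IsLRep G L A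

/-- The `(L,K)`-intersection number `Θ_{L,K}(G)`: the least universe size of an
`L`-intersection representation of `G` with all set sizes in `K`. -/
noncomputable def thetaLK {V : Type*} (G : SimpleGraph V) (L : Set ℕ) (K : Finset ℕ) : ℕ :=
  sInf {l | HasKLRep G L K l}

/-!
Put `p(x) = ∏_{l ∈ L} (x - l)`. For an `L`-intersection representation `A` of `G`, the matrix
`(p |A u ∩ A v|)_{u,v}` is symmetric and its off-diagonal entries vanish exactly on the edges
of `G`, so it bounds `mr(Gᶜ)`. Newton's forward-difference formula writes `p` in the binomial
basis, `p(x) = ∑_{t ≤ s} aₜ C(x, t)`, and the rank is bounded termwise with `q = s - r + 1`: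
* for `t > q`, `C(|A u ∩ A v|, t) = ∑_{|S| = t} [S ⊆ A u] [S ⊆ A v]` has rank `≤ C(θ, t)`;
* for `t ≤ q ≤ |A v|`, double counting gives
  `C(|A u ∩ A v|, t) C(|A v| - t, q - t) = ∑_{S ⊆ A v, |S| = q} C(|A u ∩ S|, t)`, so the
  terms `t ≤ q` together factor through the pairs `(S, k)` with `|S| = q` and `k ∈ K`,
  and have rank `≤ r C(θ, q)`.
-/

open Finset Polynomial fwdDiff

theorem Polynomial.eval_natCast_eq_sum_choose_mul_fwdDiff {R : Type*} [CommRing R] (P : R[X])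
    {d : ℕ} (hd : P.natDegree ≤ d) (n : ℕ) :
    P.eval (n : R) = ∑ k ∈ range (d + 1), (n.choose k : R) * (Δ_[1])^[k] P.eval 0 := by
  have hnewton := shift_eq_sum_fwdDiff_iter 1 P.eval n 0
  simp only [zero_add, nsmul_eq_mul, mul_one] at hnewton
  rw [hnewton, sum_subset (range_subset_range.2 (le_max_left (n + 1) (d + 1))),
    ← sum_subset (range_subset_range.2 (le_max_right (n + 1) (d + 1)))]
  · intro k _ hk
    rw [fwdDiff_iter_eq_zero_of_degree_lt (hd.trans_lt (by simpa using hk)), Pi.zero_apply,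
      mul_zero]
  · intro k _ hk
    rw [Nat.choose_eq_zero_of_lt (by simpa using hk), Nat.cast_zero, zero_mul]

theorem Finset.filter_powersetCard_univ_subset {α : Type*} [Fintype α] [DecidableEq α]
    (X : Finset α) (t : ℕ) :
    {S ∈ powersetCard t (univ : Finset α) | S ⊆ X} = powersetCard t X := by
  ext S
  simp only [mem_filter, mem_powersetCard, subset_univ, true_and]
  tauto

theorem Finset.sum_powersetCard_choose_card_inter {α : Type*} [DecidableEq α] (X Y : Finset α)
    {t q : ℕ} (htq : t ≤ q) :
    ∑ S ∈ powersetCard q Y, (#(X ∩ S)).choose t = (#(X ∩ Y)).choose t * (#Y - t).choose (q - t) :=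
  calc ∑ S ∈ powersetCard q Y, (#(X ∩ S)).choose t
      = ∑ S ∈ powersetCard q Y, #((powersetCard t (X ∩ Y)).bipartiteAbove (· ⊇ ·) S) := by
        refine sum_congr rfl fun S hS => ?_
        rw [← card_powersetCard, bipartiteAbove]
        congr 1
        ext T
        simp only [mem_powersetCard, mem_filter, subset_inter_iff] at hS ⊢
        exact ⟨fun ⟨⟨hX, hS'⟩, h⟩ => ⟨⟨⟨hX, hS'.trans hS.1⟩, h⟩, hS'⟩,
          fun ⟨⟨⟨hX, _⟩, h⟩, hS'⟩ => ⟨⟨hX, hS'⟩, h⟩⟩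
    _ = ∑ T ∈ powersetCard t (X ∩ Y), #((powersetCard q Y).bipartiteBelow (· ⊇ ·) T) :=
        sum_card_bipartiteAbove_eq_sum_card_bipartiteBelow _
    _ = ∑ T ∈ powersetCard t (X ∩ Y), (#Y - t).choose (q - t) := by
        refine sum_congr rfl fun T hT => ?_
        rw [mem_powersetCard, subset_inter_iff] at hT
        rw [bipartiteBelow, ← hT.2]
        exact card_filter_powersetCard_subset T Y q hT.1.2 (hT.2 ▸ htq)
    _ = (#(X ∩ Y)).choose t * (#Y - t).choose (q - t) := by
        rw [sum_const, card_powersetCard, smul_eq_mul]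

theorem Finset.sum_powersetCard_sum_choose_mul_div {α F : Type*} [DecidableEq α] [Field F]
    [CharZero F] (X Y : Finset α) {q : ℕ} (hq : q ≤ #Y) (c : ℕ → F) :
    ∑ S ∈ powersetCard q Y, ∑ t ∈ range (q + 1),
        ((#(X ∩ S)).choose t : F) * c t / (#Y - t).choose (q - t) =
      ∑ t ∈ range (q + 1), ((#(X ∩ Y)).choose t : F) * c t := by
  rw [sum_comm]
  refine sum_congr rfl fun t ht => ?_
  have htq : t ≤ q := Nat.lt_succ_iff.1 (mem_range.1 ht)
  have hpos : ((#Y - t).choose (q - t) : F) ≠ 0 := by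
    exact_mod_cast (Nat.choose_pos (by omega)).ne'
  rw [← sum_div, ← sum_mul, ← Nat.cast_sum, sum_powersetCard_choose_card_inter X Y htq]
  push_cast
  field_simp

theorem Matrix.rank_add_le {m n F : Type*} [Fintype n] [Field F] (A B : Matrix m n F) :
    (A + B).rank ≤ A.rank + B.rank := by
  unfold Matrix.rank
  rw [Matrix.mulVecLin_add]
  exact (Submodule.finrank_mono (LinearMap.range_add_le _ _)).trans
    (Submodule.finrank_add_le_finrank_add_finrank _ _)

theorem Matrix.rank_le_card_of_eq_sum_mul {m n ι F : Type*} [Fintype n] [Field F]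
    (M : Matrix m n F) (I : Finset ι) (f : m → ι → F) (g : ι → n → F)
    (h : ∀ u v, M u v = ∑ i ∈ I, f u i * g i v) : M.rank ≤ #I := by
  have hM : M = Matrix.of (fun u (i : I) => f u i) * Matrix.of (fun (i : I) v => g i v) := by
    ext u v
    rw [h, Matrix.mul_apply, ← sum_coe_sort I]
    rfl
  rw [hM]
  exact (Matrix.rank_mul_le_left _ _).trans ((Matrix.rank_le_card_width _).trans_eq (by simp))

def intersectionMatrix {V α R : Type*} [DecidableEq α] (A : V → Finset α) (f : ℕ → R) :
    Matrix V V R :=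
  Matrix.of fun u v => f #(A u ∩ A v)

theorem rank_intersectionMatrix_sum_choose_mul_le {V α F : Type*} [Fintype V] [Fintype α]
    [DecidableEq α] [Field F] (A : V → Finset α) (T : Finset ℕ) (c : ℕ → F) :
    (intersectionMatrix A fun z => ∑ t ∈ T, (z.choose t : F) * c t).rank ≤
      ∑ t ∈ T, (Fintype.card α).choose t := by
  have hcard : #(T.sigma fun t => powersetCard t (univ : Finset α)) =
      ∑ t ∈ T, (Fintype.card α).choose t := by simp
  rw [← hcard]
  refine Matrix.rank_le_card_of_eq_sum_mul _ _ (fun u i => if i.2 ⊆ A u then c i.1 else 0)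
    (fun i v => if i.2 ⊆ A v then 1 else 0) fun u v => ?_
  rw [intersectionMatrix, Matrix.of_apply, sum_sigma]
  refine sum_congr rfl fun t _ => ?_
  rw [inter_comm]
  simp only [mul_ite, mul_one, mul_zero, ← ite_and, ← subset_inter_iff, ← sum_filter,
    sum_const, filter_powersetCard_univ_subset, card_powersetCard, nsmul_eq_mul]

theorem rank_intersectionMatrix_sum_range_choose_mul_le {V α F : Type*} [Fintype V] [Fintype α]
    [DecidableEq α] [Field F] [CharZero F] (A : V → Finset α) (K : Finset ℕ) {q : ℕ}
    (hAK : ∀ v, #(A v) ∈ K) (hqA : ∀ v, q ≤ #(A v)) (c : ℕ → F) :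
    (intersectionMatrix A fun z => ∑ t ∈ range (q + 1), (z.choose t : F) * c t).rank ≤
      #K * (Fintype.card α).choose q := by
  have hcard : #(powersetCard q (univ : Finset α) ×ˢ K) = #K * (Fintype.card α).choose q := by
    simp [mul_comm]
  rw [← hcard]
  refine Matrix.rank_le_card_of_eq_sum_mul _ _
    (fun u i => ∑ t ∈ range (q + 1), ((#(A u ∩ i.1)).choose t : F) * c t / (i.2 - t).choose (q - t))
    (fun i v => if i.2 = #(A v) ∧ i.1 ⊆ A v then 1 else 0) fun u v => ?_
  rw [intersectionMatrix, Matrix.of_apply,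
    ← sum_powersetCard_sum_choose_mul_div (A u) (A v) (hqA v) c, sum_product]
  simp only [mul_ite, mul_one, mul_zero, ite_and, sum_ite_eq', hAK v, if_true, ← sum_filter,
    filter_powersetCard_univ_subset]

theorem IsLRep.minRank_compl_le {V F : Type*} [Fintype V] [Field F] [CharZero F] {l : ℕ}
    {G : SimpleGraph V} {L : Finset ℕ} {A : V → Finset (Fin l)} (hA : IsLRep G (L : Set ℕ) A) :
    minRank F Gᶜ ≤ (intersectionMatrix A fun z => ∏ i ∈ L, ((z : F) - i)).rank := by
  refine Nat.sInf_le ⟨_, ?_, fun u v huv => ?_, rfl⟩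
  · ext u v
    simp [intersectionMatrix, inter_comm]
  · simp [intersectionMatrix, prod_ne_zero_iff, sub_ne_zero, hA u v huv, huv]

theorem minRank_compl_le_mul_sum_choose_general {V : Type*} [Fintype V]
    (L K : Finset ℕ) (s r : ℕ) (hL : L.card = s) (hK : K.card = r) (hrs : r ≤ s)
    (hKlarge : ∀ k ∈ K, s - r < k)
    (G : SimpleGraph V) (hrep : ∃ l, HasKLRep G (↑L : Set ℕ) K l) :
    minRank ℝ Gᶜ ≤
      r * ∑ t ∈ Finset.Icc (s - r + 1) s, (thetaLK G (↑L : Set ℕ) K).choose t := by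
  set θ := thetaLK G (↑L : Set ℕ) K
  obtain ⟨A, hAK, hA⟩ : HasKLRep G (↑L : Set ℕ) K θ := Nat.sInf_mem hrep
  refine hA.minRank_compl_le.trans ?_
  rcases isEmpty_or_nonempty V with hV | ⟨⟨v⟩⟩
  · exact (Matrix.rank_le_card_width _).trans (by simp)
  set q := s - r + 1
  have hr : 0 < r := hK ▸ card_pos.2 ⟨_, hAK v⟩
  set P : ℝ[X] := ∏ i ∈ L, (X - C (i : ℝ))
  have hsplit : (intersectionMatrix A fun z => ∏ i ∈ L, ((z : ℝ) - i)) =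
      (intersectionMatrix A fun z =>
        ∑ t ∈ range (q + 1), (z.choose t : ℝ) * (Δ_[1])^[t] P.eval 0) +
      intersectionMatrix A fun z =>
        ∑ t ∈ Ico (q + 1) (s + 1), (z.choose t : ℝ) * (Δ_[1])^[t] P.eval 0 := by
    ext u v
    simp only [intersectionMatrix, Matrix.add_apply, Matrix.of_apply]
    rw [sum_range_add_sum_Ico _ (by omega : q + 1 ≤ s + 1),
      ← eval_natCast_eq_sum_choose_mul_fwdDiff P (by rw [natDegree_finsetProd_X_sub_C_eq_card, hL])]
    simp [P, eval_prod]
  calc _ ≤ _ := hsplit ▸ Matrix.rank_add_le _ _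
    _ ≤ r * θ.choose q + ∑ t ∈ Ico (q + 1) (s + 1), θ.choose t := by
      gcongr
      · simpa [hK] using
          rank_intersectionMatrix_sum_range_choose_mul_le A K hAK (fun v => hKlarge _ (hAK v)) _
      · simpa using rank_intersectionMatrix_sum_choose_mul_le A _ _
    _ ≤ r * ∑ t ∈ Icc q s, θ.choose t := by
      rw [← Ico_add_one_right_eq_Icc, sum_eq_sum_Ico_succ_bot (a := q) (by omega), mul_add]
      gcongr
      exact Nat.le_mul_of_pos_left _ hr

/-- Let `L = {l₁,…,l_s}` be a set of `s` non-negative integers and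
`K = {k₁,…,k_r}` a set of `r` positive integers with `r ≤ s` and `kᵢ > s − r` for all `i`.
Then every finite simple graph `G` admitting an `L`-intersection representation with all set
sizes in `K` satisfies `mr(Gᶜ) ≤ r · Σ_{t=s−r+1}^{s} C(Θ_{L,K}(G), t)` over the reals. -/
theorem minRank_compl_le_mul_sum_choose {V : Type*} [Fintype V]
    (L K : Finset ℕ) (s r : ℕ) (hL : L.card = s) (hK : K.card = r) (hrs : r ≤ s)
    (hKpos : ∀ k ∈ K, 0 < k) (hKlarge : ∀ k ∈ K, s - r < k)
    (G : SimpleGraph V) (hrep : ∃ l, HasKLRep G (↑L : Set ℕ) K l) :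
    minRank ℝ Gᶜ ≤
      r * ∑ t ∈ Finset.Icc (s - r + 1) s, (thetaLK G (↑L : Set ℕ) K).choose t :=
  minRank_compl_le_mul_sum_choose_general L K s r hL hK hrs hKlarge G hrep
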